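/- arXiv:math/0602133 — 4 statements merged into one kernel-verified Lean document; each statement's English description precedes it below -/
import Mathlib

section
/- For the componentwise penalized least squares objective Q(β) = (1/2)(z−β)² + p_λ(|β|) with p_λ nondecreasing and differentiable on (0,∞), if min_{β>0} {β + p_λ'(β)} > 0, then for every z with |z| < min_{β>0} {β + p_λ'(β)}, any global minimizer of Q is β = 0 (the sparsity property). -/
lemma aux_sparsity (p : ℝ → ℝ)
    (hcont : ContinuousOn p (Set.Ici (0:ℝ)))
    (hdiff : ∀ t ∈ Set.Ioi (0:ℝ), DifferentiableAt ℝ p t)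
    (m : ℝ) (hm : ∀ x ∈ {x : ℝ | ∃ β > 0, x = β + deriv p β}, m ≤ x)
    (z : ℝ) (hz : z < m) (b : ℝ) (hbpos : 0 < b)
    (hQ : (1/2) * (z - b)^2 + p b ≤ (1/2) * z^2 + p 0) : False := by
  set f : ℝ → ℝ := fun x => (1/2)*(z-x)^2 + p x with hf
  have hfc : ContinuousOn f (Set.Icc 0 b) := by
    apply ContinuousOn.add
    · fun_prop
    · exact hcont.mono (fun x hx => hx.1)
  have hderiv : ∀ x ∈ Set.Ioo (0:ℝ) b, HasDerivAt f (x - z + deriv p x) x := by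
    intro x hx
    have h0 : HasDerivAt (fun x : ℝ => (1/2)*(z-x)^2)
        ((1/2) * (↑2 * (z - x) ^ (2-1) * (0 - 1))) x :=
      (((hasDerivAt_const x z).sub (hasDerivAt_id x)).pow 2).const_mul (1/2)
    have h1 : HasDerivAt (fun x : ℝ => (1/2)*(z-x)^2) (x - z) x := by
      convert h0 using 1; push_cast; ring
    exact h1.add (hdiff x hx.1).hasDerivAt
  obtain ⟨c, hc, hceq⟩ := exists_hasDerivAt_eq_slope f (fun x => x - z + deriv p x)
    hbpos hfc hderiv
  have hmc : m ≤ c + deriv p c := hm _ ⟨c, hc.1, rfl⟩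
  have hslope : (f b - f 0) / (b - 0) ≤ 0 := by
    apply div_nonpos_of_nonpos_of_nonneg
    · have : f b ≤ f 0 := by simp only [hf]; simpa using hQ
      linarith
    · linarith
  rw [← hceq] at hslope
  linarith [hc.1]

/-- Sparsity property of penalized least squares: if the infimum of
`β + p'(β)` over `β > 0` is positive and `|z|` is below it, then any
global minimizer of `Q(β) = (1/2)(z-β)² + p(|β|)` is `0`. -/
theorem stmt0 (p : ℝ → ℝ) (hp0 : p 0 = 0)
    (hnonneg : ∀ t ∈ Set.Ici (0:ℝ), 0 ≤ p t)
    (hmono : MonotoneOn p (Set.Ici (0:ℝ)))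
    (hcont : ContinuousOn p (Set.Ici (0:ℝ)))
    (hdiff : ∀ t ∈ Set.Ioi (0:ℝ), DifferentiableAt ℝ p t)
    (m : ℝ) (hm : IsGLB {x : ℝ | ∃ β > 0, x = β + deriv p β} m) (hmpos : 0 < m)
    (z : ℝ) (hz : |z| < m)
    (b : ℝ) (hb : ∀ x : ℝ, (1/2) * (z - b)^2 + p |b| ≤ (1/2) * (z - x)^2 + p |x|) :
    b = 0 := by
  have hlb : ∀ x ∈ {x : ℝ | ∃ β > 0, x = β + deriv p β}, m ≤ x := hm.1
  have hQ0 := hb 0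
  simp only [abs_zero, hp0, sub_zero] at hQ0
  rcases lt_trichotomy b 0 with hneg | h0 | hpos
  · exfalso
    apply aux_sparsity p hcont hdiff m hlb (-z)
      (lt_of_le_of_lt (neg_le_abs z) hz) (-b) (by linarith)
    have habs : |b| = -b := abs_of_neg hneg
    rw [habs] at hQ0
    calc (1/2) * (-z - -b)^2 + p (-b) = (1/2) * (z - b)^2 + p (-b) := by ring_nf
      _ ≤ (1/2) * z^2 + 0 := by linarith
      _ = (1/2) * (-z)^2 + p 0 := by rw [hp0]; ring
  · exact h0
  · exfalso
    apply aux_sparsity p hcont hdiff m hlb z (lt_of_le_of_lt (le_abs_self z) hz) b hpos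
    rw [abs_of_pos hpos] at hQ0
    linarith
end

section
/- For a > 2, λ > 0, and the SCAD penalty, the global minimizer of Q(β) = (1/2)(z−β)² + p_λ(|β|) is: sgn(z)(|z|−λ)₊ when |z| ≤ 2λ; ((a−1)z − sgn(z)aλ)/(a−2) when 2λ < |z| ≤ aλ; and z when |z| > aλ. -/
set_option maxHeartbeats 1000000 in
lemma scad_key (p : ℝ → ℝ) (a lam w T t : ℝ) (ha : 2 < a) (hlam : 0 < lam)
    (hp : ∀ s, p s = if s < lam then lam * s
      else if s < a * lam then -(s^2 - 2*a*lam*s + lam^2) / (2*(a-1))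
      else (a+1) * lam^2 / 2)
    (hw : 0 ≤ w) (ht : 0 ≤ t)
    (hT : T = if w ≤ 2*lam then max (w - lam) 0
      else if w ≤ a*lam then ((a-1)*w - a*lam)/(a-2) else w) :
    (1/2) * (w - T)^2 + p T ≤ (1/2) * (w - t)^2 + p t := by
  have hd : (0:ℝ) < a - 2 := by linarith
  have he : (0:ℝ) < a - 1 := by linarith
  have he2 : (0:ℝ) < 2*(a-1) := by linarith
  have hal : lam < a * lam := by nlinarith
  rcases le_or_gt w (2*lam) with hw2 | hw2
  · -- case A : w ≤ 2 lam
    have hTv : T = max (w - lam) 0 := by rw [hT, if_pos hw2]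
    have hT0 : 0 ≤ T := by rw [hTv]; exact le_max_right _ _
    have hT1 : T ≤ lam := by rw [hTv]; apply max_le <;> linarith
    have hpT : p T = lam * T := by
      rw [hp]
      rcases lt_or_eq_of_le hT1 with h | h
      · rw [if_pos h]
      · rw [if_neg (by rw [h]; exact lt_irrefl _), if_pos (by rw [h]; exact hal)]
        rw [h]; field_simp; ring
    rw [hpT, hp t]
    split_ifs with h1 h2
    · -- t < lam
      rcases le_or_gt w lam with hwl | hwl
      · have hv : T = 0 := by rw [hTv]; apply max_eq_right; linarith
        rw [hv]; nlinarith [mul_nonneg ht (by linarith : (0:ℝ) ≤ lam - w + t/2)]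
      · have hv : T = w - lam := by rw [hTv]; apply max_eq_left; linarith
        rw [hv]; nlinarith [sq_nonneg (w - t - lam)]
    · -- lam ≤ t < a*lam
      rw [← sub_nonneg]
      have hrw : 1/2 * (w - t)^2 + -(t^2 - 2*a*lam*t + lam^2) / (2*(a-1)) -
          (1/2 * (w - T)^2 + lam * T) =
          ((a-1)*(w-t)^2 - (t^2 - 2*a*lam*t + lam^2) - (a-1)*(w-T)^2 - 2*(a-1)*lam*T) / (2*(a-1)) := by
        field_simp; ring
      rw [hrw]
      apply div_nonneg _ he2.le
      rcases le_or_gt w lam with hwl | hwl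
      · have hv : T = 0 := by rw [hTv]; apply max_eq_right; linarith
        rw [hv]
        nlinarith [mul_nonneg hd.le (sq_nonneg (t - lam)),
          mul_nonneg (mul_nonneg he.le (by linarith : (0:ℝ) ≤ 2*lam - w)) (by linarith : (0:ℝ) ≤ t - lam),
          mul_nonneg (mul_nonneg he.le hlam.le) (by linarith : (0:ℝ) ≤ 3*lam - 2*w)]
      · have hv : T = w - lam := by rw [hTv]; apply max_eq_left; linarith
        rw [hv]
        nlinarith [mul_nonneg hd.le (sq_nonneg (t - lam)),
          mul_nonneg (mul_nonneg he.le (by linarith : (0:ℝ) ≤ 2*lam - w)) (by linarith : (0:ℝ) ≤ t - lam),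
          mul_nonneg he.le (sq_nonneg (w - 2*lam))]
    · -- t ≥ a*lam
      rcases le_or_gt w lam with hwl | hwl
      · have hv : T = 0 := by rw [hTv]; apply max_eq_right; linarith
        rw [hv]
        nlinarith [mul_nonneg (by linarith : (0:ℝ) ≤ t - a*lam) (by linarith : (0:ℝ) ≤ t + a*lam - 2*w),
          mul_nonneg (mul_nonneg hlam.le hlam.le) (by linarith : (0:ℝ) ≤ a - 1),
          mul_nonneg hlam.le (by linarith : (0:ℝ) ≤ lam - w)]
      · have hv : T = w - lam := by rw [hTv]; apply max_eq_left; linarith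
        rw [hv]
        nlinarith [mul_nonneg (by linarith : (0:ℝ) ≤ t - a*lam) (by linarith [mul_nonneg hd.le hlam.le] : (0:ℝ) ≤ t + a*lam - 2*w),
          sq_nonneg (w - 2*lam),
          mul_nonneg (mul_nonneg he.le hlam.le) (by linarith : (0:ℝ) ≤ 2*lam - w),
          mul_nonneg (mul_nonneg he.le hd.le) (mul_nonneg hlam.le hlam.le)]
  · rcases le_or_gt w (a*lam) with hwa | hwa
    · -- case B : 2 lam < w ≤ a lam
      have hTv : T = ((a-1)*w - a*lam)/(a-2) := by
        rw [hT, if_neg (by linarith), if_pos hwa]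
      have hu : (a-2) * T = (a-1)*w - a*lam := by
        rw [hTv]; field_simp
      have hTl : lam < T := by
        rw [hTv, lt_div_iff₀ hd]; nlinarith
      have hTa : T ≤ a*lam := by
        rw [hTv, div_le_iff₀ hd]; nlinarith
      have hpT : p T = -(T^2 - 2*a*lam*T + lam^2) / (2*(a-1)) := by
        rw [hp, if_neg (not_lt.2 hTl.le)]
        rcases lt_or_eq_of_le hTa with h | h
        · rw [if_pos h]
        · rw [if_neg (by rw [h]; exact lt_irrefl _), h]; field_simp; ring
      rw [hpT, hp t]
      split_ifs with h1 h2
      · -- t < lam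
        rw [← sub_nonneg]
        have hrw : 1/2 * (w - t)^2 + lam * t -
            (1/2 * (w - T)^2 + -(T^2 - 2*a*lam*T + lam^2) / (2*(a-1))) =
            ((a-1)*(w-t)^2 + 2*(a-1)*lam*t - (a-1)*(w-T)^2 + (T^2 - 2*a*lam*T + lam^2)) / (2*(a-1)) := by
          field_simp; ring
        rw [hrw]
        apply div_nonneg _ he2.le
        have h0 : (lam - T) * ((a-2)*T - ((a-1)*w - a*lam)) = 0 := by rw [hu]; ring
        nlinarith [h0, mul_nonneg hd.le (sq_nonneg (lam - T)),
          mul_nonneg (mul_nonneg he.le (by linarith : (0:ℝ) ≤ lam - t)) (by linarith : (0:ℝ) ≤ 2*w - t - 3*lam)]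
      · -- lam ≤ t < a lam
        rw [← sub_nonneg]
        have hrw : 1/2 * (w - t)^2 + -(t^2 - 2*a*lam*t + lam^2) / (2*(a-1)) -
            (1/2 * (w - T)^2 + -(T^2 - 2*a*lam*T + lam^2) / (2*(a-1))) =
            ((a-1)*(w-t)^2 - (t^2 - 2*a*lam*t) - (a-1)*(w-T)^2 + (T^2 - 2*a*lam*T)) / (2*(a-1)) := by
          field_simp; ring
        rw [hrw]
        apply div_nonneg _ he2.le
        have h0 : (t - T) * ((a-2)*T - ((a-1)*w - a*lam)) = 0 := by rw [hu]; ring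
        nlinarith [h0, mul_nonneg hd.le (sq_nonneg (t - T))]
      · -- t ≥ a lam
        rw [← sub_nonneg]
        have hrw : 1/2 * (w - t)^2 + (a+1)*lam^2/2 -
            (1/2 * (w - T)^2 + -(T^2 - 2*a*lam*T + lam^2) / (2*(a-1))) =
            ((a-1)*(w-t)^2 + (a-1)*(a+1)*lam^2 - (a-1)*(w-T)^2 + (T^2 - 2*a*lam*T + lam^2)) / (2*(a-1)) := by
          field_simp; ring
        rw [hrw]
        apply div_nonneg _ he2.le
        have h0 : (a*lam - T) * ((a-2)*T - ((a-1)*w - a*lam)) = 0 := by rw [hu]; ring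
        nlinarith [h0, mul_nonneg hd.le (sq_nonneg (a*lam - T)),
          mul_nonneg (mul_nonneg he.le (by linarith : (0:ℝ) ≤ t - a*lam)) (by linarith : (0:ℝ) ≤ t + a*lam - 2*w)]
    · -- case C : w > a lam
      have hTv : T = w := by rw [hT, if_neg (by linarith), if_neg (by linarith)]
      have hpT : p T = (a+1)*lam^2/2 := by
        rw [hp, hTv, if_neg (by push_neg; nlinarith), if_neg (by push_neg; linarith)]
      rw [hpT, hp t, hTv]
      split_ifs with h1 h2
      · nlinarith [mul_nonneg (by linarith : (0:ℝ) ≤ w - a*lam) (by nlinarith : (0:ℝ) ≤ w + a*lam - 2*t),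
          sq_nonneg (t - (a-1)*lam),
          mul_nonneg (mul_nonneg hd.le hlam.le) hlam.le]
      · rw [← sub_nonneg]
        have hrw : 1/2 * (w - t)^2 + -(t^2 - 2*a*lam*t + lam^2) / (2*(a-1)) -
            (1/2 * (w - w)^2 + (a+1)*lam^2/2) =
            ((a-1)*(w-t)^2 - (t^2 - 2*a*lam*t + lam^2) - (a-1)*(a+1)*lam^2) / (2*(a-1)) := by
          field_simp; ring
        rw [hrw]
        apply div_nonneg _ he2.le
        nlinarith [mul_nonneg hd.le (sq_nonneg (w - t)),
          mul_nonneg (by linarith : (0:ℝ) ≤ w - a*lam) (by linarith : (0:ℝ) ≤ w + a*lam - 2*t)]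
      · nlinarith [sq_nonneg (w - t)]

/-- SCAD: the global minimizer of `Q(β) = (1/2)(z-β)² + p_λ(|β|)` with the SCAD
penalty is `sgn(z)(|z|-λ)₊` if `|z| ≤ 2λ`, `((a-1)z - sgn(z)aλ)/(a-2)` if
`2λ < |z| ≤ aλ`, and `z` if `|z| > aλ`. -/
theorem stmt5 (a lam z : ℝ) (ha : 2 < a) (hlam : 0 < lam) :
    let p : ℝ → ℝ := fun t =>
      if t < lam then lam * t
      else if t < a * lam then -(t^2 - 2*a*lam*t + lam^2) / (2*(a-1))
      else (a+1) * lam^2 / 2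
    let Q : ℝ → ℝ := fun β => (1/2) * (z - β)^2 + p |β|
    let bhat : ℝ :=
      if |z| ≤ 2 * lam then Real.sign z * max (|z| - lam) 0
      else if |z| ≤ a * lam then ((a-1) * z - Real.sign z * a * lam) / (a-2)
      else z
    ∀ β : ℝ, Q bhat ≤ Q β := by
  intro p Q bhat β
  have hp : ∀ s, p s = if s < lam then lam * s
      else if s < a * lam then -(s^2 - 2*a*lam*s + lam^2) / (2*(a-1))
      else (a+1) * lam^2 / 2 := fun s => rfl
  have hQ : ∀ x, Q x = (1/2) * (z - x)^2 + p |x| := fun x => rfl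
  have hb : bhat = if |z| ≤ 2 * lam then Real.sign z * max (|z| - lam) 0
      else if |z| ≤ a * lam then ((a-1) * z - Real.sign z * a * lam) / (a-2)
      else z := rfl
  have hd : (0:ℝ) < a - 2 := by linarith
  set w := |z| with hwdef
  have hw : 0 ≤ w := abs_nonneg z
  set T : ℝ := if w ≤ 2*lam then max (w - lam) 0
      else if w ≤ a*lam then ((a-1)*w - a*lam)/(a-2) else w with hT
  have hT0 : 0 ≤ T := by
    rw [hT]
    split_ifs with h1 h2
    · exact le_max_right _ _
    · apply div_nonneg _ hd.le; nlinarith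
    · exact hw
  -- bhat relates to T
  have hbT : |bhat| = T ∧ (z - bhat)^2 = (w - T)^2 := by
    rcases lt_trichotomy z 0 with hz | hz | hz
    · have hs : Real.sign z = -1 := Real.sign_of_neg hz
      have hzw : w = -z := abs_of_neg hz
      have hbv : bhat = -T := by
        rw [hb, hs, hT]
        split_ifs with h1 h2
        · ring
        · rw [hzw]; field_simp; ring
        · rw [hzw]; ring
      constructor
      · rw [hbv, abs_neg, abs_of_nonneg hT0]
      · rw [hbv, hzw]; ring
    · have hs : Real.sign z = 0 := by rw [hz, Real.sign_zero]
      have hzw : w = 0 := by rw [hwdef, hz, abs_zero]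
      have hTv : T = 0 := by
        rw [hT, if_pos (by rw [hzw]; linarith)]
        rw [hzw]; apply max_eq_right; linarith
      have hbv : bhat = 0 := by
        rw [hb, hs, if_pos (by rw [hzw]; linarith)]; ring
      constructor
      · rw [hbv, hTv, abs_zero]
      · rw [hbv, hTv, hzw, hz]
    · have hs : Real.sign z = 1 := Real.sign_of_pos hz
      have hzw : w = z := abs_of_pos hz
      have hbv : bhat = T := by
        rw [hb, hs, hT, hzw]
        split_ifs with h1 h2
        · ring
        · ring
        · rfl
      constructor
      · rw [hbv, abs_of_nonneg hT0]
      · rw [hbv, hzw]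
  -- Q bhat = f T
  have h1 : Q bhat = (1/2) * (w - T)^2 + p T := by
    rw [hQ, hbT.1, hbT.2]
  -- Q β ≥ f |β|
  have h2 : (1/2) * (w - |β|)^2 + p |β| ≤ Q β := by
    rw [hQ]
    have : (w - |β|)^2 ≤ (z - β)^2 := by
      nlinarith [sq_abs z, sq_abs β, le_abs_self (z*β), abs_mul z β]
    nlinarith [this]
  rw [h1]
  calc (1/2) * (w - T)^2 + p T ≤ (1/2) * (w - |β|)^2 + p |β| :=
        scad_key p a lam w T (|β|) ha hlam hp hw (abs_nonneg β) hT
    _ ≤ Q β := h2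
end

section
/- For the L_p penalty with 0 < p < 1, i.e. p_λ(t) = λt^p, the function t ↦ t + p_λ'(t) = t + λp·t^{p−1} on (0,∞) attains a strictly positive minimum at a strictly positive point; in particular argmin_{t>0}{t + p_λ'(t)} ≠ 0, so the L_p penalized least squares estimator fails the continuity condition. -/
/-!
Write `c = λp` and `r = p - 1 < 0`. Since `exp u ≥ 1 + u` and `log x ≤ x - 1`, the power `x ↦ x ^ r`
lies above its tangent line at `1`. Rescaling this at the point `t₀ > 0` with `t₀ = -r c t₀ ^ r`
(where the tangent slope of `c t ^ r` is `-1`) shows that `t ↦ t + c t ^ r` is minimised on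
`(0, ∞)` at `t₀`; such a `t₀` is `(-r c) ^ (1 / (1 - r))`.
-/

open Real Set

theorem one_add_mul_sub_one_le_rpow_of_nonpos {x r : ℝ} (hx : 0 < x) (hr : r ≤ 0) :
    1 + r * (x - 1) ≤ x ^ r :=
  calc 1 + r * (x - 1) ≤ r * log x + 1 := by nlinarith [log_le_sub_one_of_pos hx]
    _ ≤ exp (r * log x) := add_one_le_exp _
    _ = x ^ r := by rw [rpow_def_of_pos hx, mul_comm]

theorem isMinOn_add_mul_rpow {c r t₀ : ℝ} (hc : 0 ≤ c) (hr : r ≤ 0) (ht₀ : 0 < t₀)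
    (hcrit : t₀ = -r * c * t₀ ^ r) :
    IsMinOn (fun t ↦ t + c * t ^ r) (Ioi 0) t₀ := by
  intro t (ht : 0 < t)
  set x := t / t₀
  have hx : 0 < x := div_pos ht ht₀
  have htx : t = t₀ * x := (mul_div_cancel₀ t ht₀.ne').symm
  have hbern := one_add_mul_sub_one_le_rpow_of_nonpos hx hr
  have hpow : t ^ r = t₀ ^ r * x ^ r := by rw [htx, mul_rpow ht₀.le hx.le]
  have hscale : 0 ≤ c * t₀ ^ r := mul_nonneg hc (rpow_nonneg ht₀.le r)
  show t₀ + c * t₀ ^ r ≤ t + c * t ^ r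
  rw [hpow]
  nlinarith [mul_le_mul_of_nonneg_left hbern hscale]

theorem exists_pos_eq_neg_mul_mul_rpow {c r : ℝ} (hc : 0 < c) (hr : r < 0) :
    ∃ t₀ : ℝ, 0 < t₀ ∧ t₀ = -r * c * t₀ ^ r := by
  have hrc : 0 < -r * c := mul_pos (neg_pos.mpr hr) hc
  set t₀ := (-r * c) ^ (1 - r)⁻¹
  have ht₀ : 0 < t₀ := rpow_pos_of_pos hrc _
  refine ⟨t₀, ht₀, ?_⟩
  calc t₀ = t₀ ^ ((1 - r) + r) := by rw [sub_add_cancel, rpow_one]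
    _ = t₀ ^ (1 - r) * t₀ ^ r := rpow_add ht₀ _ _
    _ = -r * c * t₀ ^ r := by rw [rpow_inv_rpow hrc.le (by linarith)]

/-- For the Lp penalty with `0 < p < 1`, the map `t ↦ t + λ p t^(p-1)` on
`(0,∞)` attains a strictly positive minimum at a strictly positive point;
hence its argmin over `t > 0` is not `0` (failure of continuity condition). -/
theorem stmt7 (p lam : ℝ) (hp0 : 0 < p) (hp1 : p < 1) (hlam : 0 < lam) :
    ∃ t0 : ℝ, 0 < t0 ∧
      (∀ t : ℝ, 0 < t → t0 + lam * p * t0 ^ (p - 1) ≤ t + lam * p * t ^ (p - 1)) ∧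
      0 < t0 + lam * p * t0 ^ (p - 1) := by
  have hc : 0 < lam * p := mul_pos hlam hp0
  have hr : p - 1 < 0 := by linarith
  obtain ⟨t₀, ht₀, hcrit⟩ := exists_pos_eq_neg_mul_mul_rpow hc hr
  have hmin := isMinOn_add_mul_rpow hc.le hr.le ht₀ hcrit
  exact ⟨t₀, ht₀, fun t ht ↦ hmin (mem_Ioi.mpr ht), by positivity⟩
end

section
/- Let q(m) = √(1 − m²) on (−1,1). Then for y ∈ {−1,1}, the Bregman loss ℓ(y, m̂) = q(m̂) − q(y) − q'(m̂)(m̂ − y) equals exp(−(y/2)·log((1+m̂)/(1−m̂))) for all m̂ ∈ (−1,1); i.e., it is the AdaBoost exponential loss. -/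
/-!
Since `y² = 1`, the term `q(y)` vanishes and the loss simplifies to `(1 - m y) / √(1 - m²)`,
which is `√((1 - m y) / (1 + m y))`. On the other side, flipping the sign of `y` inverts the odds
ratio `(1 + m) / (1 - m)`, so the exponential is also `exp (½ log ((1 - m y) / (1 + m y)))`.
-/

namespace Real

theorem exp_log_div_two {x : ℝ} (hx : 0 < x) : exp (log x / 2) = √x := by
  rw [sqrt_eq_rpow, rpow_def_of_pos hx, div_eq_mul_one_div]

theorem one_sub_div_sqrt_one_sub_sq {a : ℝ} (ha₁ : -1 < a) (ha₂ : a < 1) :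
    (1 - a) / √(1 - a ^ 2) = √((1 - a) / (1 + a)) := by
  have hm : 0 < 1 - a := by linarith
  have hp : 0 < 1 + a := by linarith
  rw [show 1 - a ^ 2 = (1 - a) * (1 + a) by ring, sqrt_mul hm.le, sqrt_div hm.le]
  field_simp
  rw [sq_sqrt hm.le]

end Real

open Real

theorem bregman_sqrt_one_sub_sq {y m : ℝ} (hy : y ^ 2 = 1) (hm : m ^ 2 < 1) :
    √(1 - m ^ 2) - √(1 - y ^ 2) - (-m / √(1 - m ^ 2)) * (m - y) = (1 - m * y) / √(1 - m ^ 2) := by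
  have hpos : 0 < √(1 - m ^ 2) := sqrt_pos.mpr (by linarith)
  rw [hy, sub_self, sqrt_zero]
  field_simp
  linear_combination mul_self_sqrt (by linarith : 0 ≤ 1 - m ^ 2)

theorem neg_half_mul_log_odds {y m : ℝ} (hy : y = -1 ∨ y = 1) :
    -(y / 2) * log ((1 + m) / (1 - m)) = log ((1 - m * y) / (1 + m * y)) / 2 := by
  rcases hy with rfl | rfl
  · ring_nf
  · rw [mul_one, ← inv_div (1 + m) (1 - m), log_inv]
    ring

/-- For `q(m) = √(1-m²)` and `y ∈ {-1,1}`, the Bregman loss equals the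
AdaBoost exponential loss `exp(-(y/2) log((1+m̂)/(1-m̂)))` on `(-1,1)`. -/
theorem stmt19 (y : ℝ) (hy : y = -1 ∨ y = 1) :
    ∀ m : ℝ, -1 < m → m < 1 →
      Real.sqrt (1 - m^2) - Real.sqrt (1 - y^2)
          - (-m / Real.sqrt (1 - m^2)) * (m - y)
        = Real.exp (-(y/2) * Real.log ((1 + m) / (1 - m))) := by
  intro m hm₁ hm₂
  have hy2 : y ^ 2 = 1 := by rcases hy with rfl | rfl <;> norm_num
  have hmy : -1 < m * y ∧ m * y < 1 := by
    rcases hy with rfl | rfl <;> constructor <;> linarith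
  have hmy2 : (m * y) ^ 2 = m ^ 2 := by rw [mul_pow, hy2, mul_one]
  rw [bregman_sqrt_one_sub_sq hy2 (by nlinarith), neg_half_mul_log_odds hy,
    exp_log_div_two (div_pos (by linarith) (by linarith)),
    ← one_sub_div_sqrt_one_sub_sq hmy.1 hmy.2, hmy2]
end
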